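/- If Γ is a 3-connected finite simple graph and v is a vertex of Γ of degree 4 lying on exactly two triangles which intersect only in v, then the graph Γ' obtained by the splitting operation T₁' at v (replacing v by two adjacent vertices v₁, v₂, with v₁ adjacent to the two vertices of one triangle and v₂ adjacent to the two vertices of the other) is 3-connected. -/
import Mathlib


open SimpleGraph

/-- A graph is 3-connected: at least 4 vertices, and deleting any set of at most 2
vertices leaves a connected graph. -/
def ThreeConnected {W : Type*} (H : SimpleGraph W) : Prop :=
  4 ≤ Nat.card W ∧ ∀ s : Set W, s.ncard ≤ 2 → (H.induce sᶜ).Connected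

/-- The splitting transformation `T₁'` at the vertex `v`: delete `v` and add two new
adjacent vertices (`Sum.inr false` and `Sum.inr true`), the first joined to `a` and `b`,
the second joined to `c` and `d`. -/
def splitVertex {V : Type*} (Γ : SimpleGraph V) (v a b c d : V) :
    SimpleGraph ({x : V // x ≠ v} ⊕ Bool) :=
  SimpleGraph.fromRel fun p q =>
    match p, q with
    | Sum.inl x, Sum.inl y => Γ.Adj x.1 y.1
    | Sum.inr i, Sum.inl x => if i then x.1 = c ∨ x.1 = d else x.1 = a ∨ x.1 = b
    | Sum.inr _, Sum.inr _ => True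
    | _, _ => False

/-- Projection from the split vertex set back to `V`, sending both new vertices to `v`. -/
def svProj {V : Type*} (v : V) : ({x : V // x ≠ v} ⊕ Bool) → V
  | Sum.inl x => x.1
  | Sum.inr _ => v

/-- If `Γ` is a 3-connected finite graph and `v` is a degree-4 vertex lying on exactly
two triangles `vab` and `vcd` which meet only in `v`, then the graph obtained by the
splitting operation `T₁'` at `v` is again 3-connected. -/
theorem stmt_19 {V : Type*} [Fintype V] (Γ : SimpleGraph V)
    (h3 : ThreeConnected Γ)
    (v a b c d : V)
    (ha : a ≠ v) (hb : b ≠ v) (hc : c ≠ v) (hd : d ≠ v)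
    (hnbr : Γ.neighborSet v = {a, b, c, d})
    (hab' : a ≠ b) (hac' : a ≠ c) (had' : a ≠ d) (hbc' : b ≠ c) (hbd' : b ≠ d)
    (hcd' : c ≠ d)
    (hab : Γ.Adj a b) (hcd : Γ.Adj c d)
    (hnac : ¬ Γ.Adj a c) (hnad : ¬ Γ.Adj a d) (hnbc : ¬ Γ.Adj b c) (hnbd : ¬ Γ.Adj b d) :
    ThreeConnected (splitVertex Γ v a b c d) := by
  classical
  obtain ⟨hcard, hconn⟩ := h3
  set Γ' := splitVertex Γ v a b c d with hΓ'
  -- cardinality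
  have h5 : 5 ≤ Nat.card ({x : V // x ≠ v} ⊕ Bool) := by
    have e := Equiv.sumCompl (fun x : V => x = v)
    have h1 : Nat.card ({x : V // x = v} ⊕ {x : V // ¬ x = v}) = Nat.card V :=
      Nat.card_congr e
    rw [Nat.card_sum] at h1
    have h2 : Nat.card {x : V // x = v} = 1 := by
      rw [Nat.card_eq_fintype_card]; exact Fintype.card_subtype_eq v
    have hB : Nat.card Bool = 2 := by simp [Nat.card_eq_fintype_card]
    rw [Nat.card_sum, hB]
    have h3' : Nat.card {x : V // ¬ x = v} = Nat.card {x : V // x ≠ v} := rfl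
    omega
  -- neighbours of v
  have hnbrs : ∀ x : V, Γ.Adj v x → x = a ∨ x = b ∨ x = c ∨ x = d := by
    intro x hx
    have hmem : x ∈ Γ.neighborSet v := hx
    rw [hnbr] at hmem
    simpa using hmem
  -- adjacency lemmas for Γ'
  have adjG : ∀ (x y : {x : V // x ≠ v}), Γ.Adj x.1 y.1 →
      Γ'.Adj (Sum.inl x) (Sum.inl y) := by
    intro x y h
    rw [hΓ', splitVertex, fromRel_adj]
    exact ⟨fun e => h.ne (congrArg Subtype.val (Sum.inl.inj e)), Or.inl h⟩
  have adjRR : ∀ i j : Bool, i ≠ j → Γ'.Adj (Sum.inr i) (Sum.inr j) := by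
    intro i j h
    rw [hΓ', splitVertex, fromRel_adj]
    exact ⟨by simpa using h, Or.inl trivial⟩
  have adjA : ∀ (x : {x : V // x ≠ v}), x.1 = a ∨ x.1 = b →
      Γ'.Adj (Sum.inr false) (Sum.inl x) := by
    intro x h
    rw [hΓ', splitVertex, fromRel_adj]
    refine ⟨by simp, Or.inl ?_⟩
    simpa using h
  have adjC : ∀ (x : {x : V // x ≠ v}), x.1 = c ∨ x.1 = d →
      Γ'.Adj (Sum.inr true) (Sum.inl x) := by
    intro x h
    rw [hΓ', splitVertex, fromRel_adj]
    refine ⟨by simp, Or.inl ?_⟩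
    simpa using h
  constructor
  · omega
  intro s hs
  set t : Set V := svProj v '' s with htdef
  have htcard : t.ncard ≤ 2 := le_trans (Set.ncard_image_le s.toFinite) hs
  have hΓt : (Γ.induce tᶜ).Connected := hconn t htcard
  -- membership transfer
  have hmem_inl : ∀ (x : V) (hx : x ≠ v),
      x ∈ tᶜ ↔ (Sum.inl ⟨x, hx⟩ : {x : V // x ≠ v} ⊕ Bool) ∈ sᶜ := by
    intro x hx
    simp only [Set.mem_compl_iff]
    constructor
    · intro h hmem; exact h ⟨_, hmem, rfl⟩
    · intro h hmem
      obtain ⟨p, hp, hpx⟩ := hmem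
      cases p with
      | inl y =>
        obtain ⟨yv, hy⟩ := y
        have : yv = x := hpx
        subst this
        exact h hp
      | inr i => exact hx ((hpx : v = x).symm)
  have hmem_v : v ∈ tᶜ ↔
      ((Sum.inr false : {x : V // x ≠ v} ⊕ Bool) ∈ sᶜ ∧
        (Sum.inr true : {x : V // x ≠ v} ⊕ Bool) ∈ sᶜ) := by
    simp only [Set.mem_compl_iff]
    constructor
    · intro h
      constructor
      · intro hmem; exact h ⟨_, hmem, rfl⟩
      · intro hmem; exact h ⟨_, hmem, rfl⟩
    · rintro ⟨h1, h2⟩ ⟨p, hp, hpv⟩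
      cases p with
      | inl y => exact y.2 hpv
      | inr i => cases i with
        | false => exact h1 hp
        | true => exact h2 hp
  -- reachability helpers in the induced graph
  have indAdj : ∀ (p q : {y // y ∈ (sᶜ : Set ({x : V // x ≠ v} ⊕ Bool))}),
      Γ'.Adj p.1 q.1 → (Γ'.induce sᶜ).Reachable p q := by
    intro p q h
    exact SimpleGraph.Adj.reachable h
  have hub : ∀ (i j : Bool) (hi : (Sum.inr i : {x : V // x ≠ v} ⊕ Bool) ∈ sᶜ)
      (hj : (Sum.inr j : {x : V // x ≠ v} ⊕ Bool) ∈ sᶜ),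
      (Γ'.induce sᶜ).Reachable ⟨Sum.inr i, hi⟩ ⟨Sum.inr j, hj⟩ := by
    intro i j hi hj
    by_cases hij : i = j
    · subst hij; exact Reachable.refl _
    · exact indAdj _ _ (adjRR i j hij)
  have spoke : ∀ (x : V) (hx : x ≠ v), Γ.Adj v x →
      ∀ (hxs : (Sum.inl ⟨x, hx⟩ : {x : V // x ≠ v} ⊕ Bool) ∈ sᶜ)
        (hf : (Sum.inr false : {x : V // x ≠ v} ⊕ Bool) ∈ sᶜ)
        (ht2 : (Sum.inr true : {x : V // x ≠ v} ⊕ Bool) ∈ sᶜ)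
        (j : Bool) (hj : (Sum.inr j : {x : V // x ≠ v} ⊕ Bool) ∈ sᶜ),
      (Γ'.induce sᶜ).Reachable ⟨Sum.inr j, hj⟩ ⟨Sum.inl ⟨x, hx⟩, hxs⟩ := by
    intro x hx hadj hxs hf ht2 j hj
    rcases hnbrs x hadj with h | h | h | h
    · exact (hub j false hj hf).trans (indAdj _ _ (adjA ⟨x, hx⟩ (Or.inl h)))
    · exact (hub j false hj hf).trans (indAdj _ _ (adjA ⟨x, hx⟩ (Or.inr h)))
    · exact (hub j true hj ht2).trans (indAdj _ _ (adjC ⟨x, hx⟩ (Or.inl h)))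
    · exact (hub j true hj ht2).trans (indAdj _ _ (adjC ⟨x, hx⟩ (Or.inr h)))
  -- the key lifting lemma
  have key : ∀ (u w : {x : V // x ∈ (tᶜ : Set V)}) (W : (Γ.induce tᶜ).Walk u w)
      (p q : {y // y ∈ (sᶜ : Set ({x : V // x ≠ v} ⊕ Bool))}),
      svProj v p.1 = u.1 → svProj v q.1 = w.1 →
      (Γ'.induce sᶜ).Reachable p q := by
    intro u w W
    induction W with
    | nil =>
      rename_i u₀
      intro p q hp hq
      obtain ⟨pv, hpm⟩ := p
      obtain ⟨qv, hqm⟩ := q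
      cases pv with
      | inl x =>
        cases qv with
        | inl y =>
          have hxy : x = y := Subtype.ext ((hp : x.1 = u₀.1).trans (hq : y.1 = u₀.1).symm)
          subst hxy
          exact Reachable.refl _
        | inr j =>
          exact absurd ((hp : x.1 = u₀.1).trans (hq : v = u₀.1).symm) x.2
      | inr i =>
        cases qv with
        | inl y =>
          exact absurd ((hq : y.1 = u₀.1).trans (hp : v = u₀.1).symm) y.2
        | inr j => exact hub i j hpm hqm
    | cons h W ih =>
      rename_i u₁ u₂ w₁
      intro p q hp hq
      have hadj : Γ.Adj u₁.1 u₂.1 := h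
      by_cases hv2 : u₂.1 = v
      · have hvt : v ∈ tᶜ := hv2 ▸ u₂.2
        obtain ⟨hf, ht2⟩ := hmem_v.mp hvt
        refine Reachable.trans ?_ (ih ⟨Sum.inr false, hf⟩ q (by simp [svProj, hv2]) hq)
        obtain ⟨pv, hpm⟩ := p
        cases pv with
        | inl x =>
          have hx1 : x.1 = u₁.1 := hp
          have hadj' : Γ.Adj v x.1 := by rw [hx1]; exact (hv2 ▸ hadj).symm
          have := spoke x.1 x.2 hadj' hpm hf ht2 false hf
          exact this.symm
        | inr i =>
          exfalso
          have hu1 : u₁.1 = v := (hp : v = u₁.1).symm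
          exact Γ.irrefl (by rw [hu1, hv2] at hadj; exact hadj)
      · have hu2s : (Sum.inl ⟨u₂.1, hv2⟩ : {x : V // x ≠ v} ⊕ Bool) ∈ sᶜ :=
          (hmem_inl _ hv2).mp u₂.2
        refine Reachable.trans ?_ (ih ⟨Sum.inl ⟨u₂.1, hv2⟩, hu2s⟩ q rfl hq)
        obtain ⟨pv, hpm⟩ := p
        cases pv with
        | inl x =>
          have hx1 : x.1 = u₁.1 := hp
          refine indAdj _ _ (adjG x ⟨u₂.1, hv2⟩ ?_)
          rw [hx1]; exact hadj
        | inr i =>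
          have hu1 : u₁.1 = v := (hp : v = u₁.1).symm
          have hvt : v ∈ tᶜ := hu1 ▸ u₁.2
          obtain ⟨hf, ht2⟩ := hmem_v.mp hvt
          exact spoke u₂.1 hv2 (hu1 ▸ hadj) hu2s hf ht2 i hpm
  -- anchoring: every surviving vertex reaches a vertex lying over tᶜ
  have anchor : ∀ p : {y // y ∈ (sᶜ : Set ({x : V // x ≠ v} ⊕ Bool))},
      ∃ (u : {x : V // x ∈ (tᶜ : Set V)})
        (p' : {y // y ∈ (sᶜ : Set ({x : V // x ≠ v} ⊕ Bool))}),
        svProj v p'.1 = u.1 ∧ (Γ'.induce sᶜ).Reachable p p' := by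
    intro p
    obtain ⟨pv, hpm⟩ := p
    cases pv with
    | inl x =>
      exact ⟨⟨x.1, (hmem_inl x.1 x.2).mpr hpm⟩, ⟨Sum.inl x, hpm⟩, rfl, Reachable.refl _⟩
    | inr j =>
      by_cases hvt : v ∈ (tᶜ : Set V)
      · exact ⟨⟨v, hvt⟩, ⟨Sum.inr j, hpm⟩, rfl, Reachable.refl _⟩
      · have hvt' : v ∈ t := not_not.mp hvt
        obtain ⟨r, hr, hrv⟩ := hvt'
        cases r with
        | inl y => exact absurd hrv y.2
        | inr i =>
          have hij : i ≠ j := fun e => hpm (e ▸ hr)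
          cases j with
          | false =>
            have hone : (Sum.inl ⟨a, ha⟩ : {x : V // x ≠ v} ⊕ Bool) ∈ sᶜ ∨
                (Sum.inl ⟨b, hb⟩ : {x : V // x ≠ v} ⊕ Bool) ∈ sᶜ := by
              by_contra hcon
              push_neg at hcon
              obtain ⟨hA, hB⟩ := hcon
              rw [Set.notMem_compl_iff] at hA hB
              have hsub : ({Sum.inr i, Sum.inl ⟨a, ha⟩, Sum.inl ⟨b, hb⟩} :
                  Set ({x : V // x ≠ v} ⊕ Bool)) ⊆ s := by
                intro z hz
                rcases hz with rfl | rfl | rfl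
                · exact hr
                · exact hA
                · exact hB
              have h3eq : ({Sum.inr i, Sum.inl ⟨a, ha⟩, Sum.inl ⟨b, hb⟩} :
                  Set ({x : V // x ≠ v} ⊕ Bool)).ncard = 3 := by
                rw [Set.ncard_eq_three]
                exact ⟨_, _, _, by simp, by simp, by simp [Subtype.ext_iff, hab'], rfl⟩
              have := Set.ncard_le_ncard hsub s.toFinite
              omega
            rcases hone with hA | hB
            · exact ⟨⟨a, (hmem_inl a ha).mpr hA⟩, ⟨Sum.inl ⟨a, ha⟩, hA⟩, rfl,
                indAdj ⟨_, hpm⟩ ⟨_, hA⟩ (adjA ⟨a, ha⟩ (Or.inl rfl))⟩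
            · exact ⟨⟨b, (hmem_inl b hb).mpr hB⟩, ⟨Sum.inl ⟨b, hb⟩, hB⟩, rfl,
                indAdj ⟨_, hpm⟩ ⟨_, hB⟩ (adjA ⟨b, hb⟩ (Or.inr rfl))⟩
          | true =>
            have hone : (Sum.inl ⟨c, hc⟩ : {x : V // x ≠ v} ⊕ Bool) ∈ sᶜ ∨
                (Sum.inl ⟨d, hd⟩ : {x : V // x ≠ v} ⊕ Bool) ∈ sᶜ := by
              by_contra hcon
              push_neg at hcon
              obtain ⟨hC, hD⟩ := hcon
              rw [Set.notMem_compl_iff] at hC hD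
              have hsub : ({Sum.inr i, Sum.inl ⟨c, hc⟩, Sum.inl ⟨d, hd⟩} :
                  Set ({x : V // x ≠ v} ⊕ Bool)) ⊆ s := by
                intro z hz
                rcases hz with rfl | rfl | rfl
                · exact hr
                · exact hC
                · exact hD
              have h3eq : ({Sum.inr i, Sum.inl ⟨c, hc⟩, Sum.inl ⟨d, hd⟩} :
                  Set ({x : V // x ≠ v} ⊕ Bool)).ncard = 3 := by
                rw [Set.ncard_eq_three]
                exact ⟨_, _, _, by simp, by simp, by simp [Subtype.ext_iff, hcd'], rfl⟩
              have := Set.ncard_le_ncard hsub s.toFinite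
              omega
            rcases hone with hC | hD
            · exact ⟨⟨c, (hmem_inl c hc).mpr hC⟩, ⟨Sum.inl ⟨c, hc⟩, hC⟩, rfl,
                indAdj ⟨_, hpm⟩ ⟨_, hC⟩ (adjC ⟨c, hc⟩ (Or.inl rfl))⟩
            · exact ⟨⟨d, (hmem_inl d hd).mpr hD⟩, ⟨Sum.inl ⟨d, hd⟩, hD⟩, rfl,
                indAdj ⟨_, hpm⟩ ⟨_, hD⟩ (adjC ⟨d, hd⟩ (Or.inr rfl))⟩
  rw [connected_iff]
  constructor
  · intro p q
    obtain ⟨u, p', hpu, rp⟩ := anchor p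
    obtain ⟨w, q', hqw, rq⟩ := anchor q
    have rk := (hΓt.preconnected u w).elim fun W => key u w W p' q' hpu hqw
    exact (rp.trans rk).trans rq.symm
  · have hne : (sᶜ : Set ({x : V // x ≠ v} ⊕ Bool)).Nonempty := by
      rw [Set.nonempty_compl]
      intro h
      rw [h, Set.ncard_univ] at hs
      omega
    exact ⟨⟨hne.choose, hne.choose_spec⟩⟩
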